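/- arXiv:1810.01752 — 4 statements merged into one kernel-verified Lean document; each statement's English description precedes it below -/
import Mathlib

section
/- Let λ ∈ ℂ and for k ∈ ℤ define a_k = (λ + k + 1)/2 and b_k = (λ - k + 1)/2. Then the following are equivalent: (i) for every even integer k, the complex number a_k · b_{k+2} is a strictly negative real number; (ii) λ is purely imaginary (Re λ = 0), or λ is real with -1 < λ < 1. -/
/-!
Since `a k * b (k + 2) = (λ² - (k + 1)²) / 4`, writing `λ = x + iy` the condition says that
`xy = 0` and `x² - y² < (k + 1)²` for every even `k`. The squares of the odd integers `k + 1`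
are at least `1`, with equality at `k = 0`, so this is `xy = 0 ∧ x² - y² < 1`: either `x = 0`,
or `y = 0` and `x² < 1`.
-/

lemma sq_sub_ofReal_sq_div_four_isNegReal_iff (z : ℂ) (t : ℝ) :
    ((z ^ 2 - (t : ℂ) ^ 2) / 4).im = 0 ∧ ((z ^ 2 - (t : ℂ) ^ 2) / 4).re < 0 ↔
      z.re * z.im = 0 ∧ z.re ^ 2 - z.im ^ 2 < t ^ 2 := by
  simp only [Complex.div_ofNat_re, Complex.div_ofNat_im, Complex.sub_re, Complex.sub_im, sq,
    Complex.mul_re, Complex.mul_im, Complex.ofReal_re, Complex.ofReal_im]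
  constructor <;> rintro ⟨him, hre⟩ <;> exact ⟨by linarith, by linarith⟩

lemma one_le_sq_add_one_of_even {k : ℤ} (hk : Even k) : (1 : ℝ) ≤ ((k : ℝ) + 1) ^ 2 := by
  have hne : k + 1 ≠ 0 := by
    obtain ⟨r, hr⟩ := hk
    omega
  exact_mod_cast (one_le_sq_iff_one_le_abs _).mpr (Int.one_le_abs hne)

lemma mul_eq_zero_and_sq_sub_sq_lt_one_iff (x y : ℝ) :
    x * y = 0 ∧ x ^ 2 - y ^ 2 < 1 ↔ x = 0 ∨ (y = 0 ∧ -1 < x ∧ x < 1) := by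
  rw [mul_eq_zero, or_and_right]
  refine or_congr ⟨And.left, fun hx => ⟨hx, by nlinarith⟩⟩ ?_
  rw [and_congr_right_iff]
  rintro rfl
  rw [← abs_lt, ← sq_lt_one_iff_abs_lt_one]
  simp

/-- For `a k = (λ + k + 1)/2`, `b k = (λ - k + 1)/2`, the product
`a k * b (k+2)` is a strictly negative real number for every even integer `k`
iff `λ` is purely imaginary, or `λ` is real with `-1 < λ < 1`. -/
theorem stmt_1 (lam : ℂ) (a b : ℤ → ℂ)
    (ha : ∀ k : ℤ, a k = (lam + k + 1) / 2)
    (hb : ∀ k : ℤ, b k = (lam - k + 1) / 2) :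
    (∀ k : ℤ, Even k → (a k * b (k + 2)).im = 0 ∧ (a k * b (k + 2)).re < 0) ↔
      (lam.re = 0 ∨ (lam.im = 0 ∧ -1 < lam.re ∧ lam.re < 1)) := by
  have hprod : ∀ k : ℤ, a k * b (k + 2) = (lam ^ 2 - (((k : ℝ) + 1 : ℝ) : ℂ) ^ 2) / 4 := by
    intro k
    rw [ha, hb]
    push_cast
    ring
  simp only [hprod, sq_sub_ofReal_sq_div_four_isNegReal_iff]
  rw [← mul_eq_zero_and_sq_sub_sq_lt_one_iff]
  constructor
  · intro h
    simpa using h 0 Even.zero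
  · rintro ⟨hxy, hlt⟩ k hk
    exact ⟨hxy, hlt.trans_le (one_le_sq_add_one_of_even hk)⟩
end

section
/- Let λ ∈ ℂ and for k ∈ ℤ define a_k = (λ + k + 1)/2 and b_k = (λ - k + 1)/2. Then the following are equivalent: (i) for every odd integer k, the complex number a_k · b_{k+2} is a strictly negative real number; (ii) λ is purely imaginary and nonzero (Re λ = 0 and λ ≠ 0). -/
/-!
Since `b (k + 2) = (λ - (k + 1)) / 2`, the product `a k * b (k + 2)` equals `(λ² - (k + 1)²) / 4`.
For `k = -1` the condition says that `λ²` is a negative real, i.e. `λ ∈ iℝ \ {0}`; conversely, if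
`λ²` is a negative real then so is `λ² - n²` for every real `n`.
-/

open scoped ComplexOrder

namespace Complex

theorem sq_neg_iff {z : ℂ} : z ^ 2 < 0 ↔ z.re = 0 ∧ z ≠ 0 := by
  rw [lt_iff_le_and_ne, sq_nonpos_iff, ne_eq, pow_eq_zero_iff two_ne_zero]

theorem sq_sub_ofReal_sq_neg {z : ℂ} (hz : z ^ 2 < 0) (x : ℝ) : z ^ 2 - (x : ℂ) ^ 2 < 0 := by
  have hx : (0 : ℂ) ≤ (x : ℂ) ^ 2 := by exact_mod_cast sq_nonneg x
  linear_combination hz + hx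

theorem div_neg_iff_of_pos {z c : ℂ} (hc : 0 < c) : z / c < 0 ↔ z < 0 := by
  rw [div_lt_iff₀ hc, zero_mul]

end Complex

/-- For `a k = (λ + k + 1)/2`, `b k = (λ - k + 1)/2`, the product
`a k * b (k+2)` is a strictly negative real number for every odd integer `k`
iff `λ` is purely imaginary and nonzero. -/
theorem stmt_2 (lam : ℂ) (a b : ℤ → ℂ)
    (ha : ∀ k : ℤ, a k = (lam + k + 1) / 2)
    (hb : ∀ k : ℤ, b k = (lam - k + 1) / 2) :
    (∀ k : ℤ, Odd k → (a k * b (k + 2)).im = 0 ∧ (a k * b (k + 2)).re < 0) ↔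
      (lam.re = 0 ∧ lam ≠ 0) := by
  have hprod (k : ℤ) : a k * b (k + 2) = (lam ^ 2 - ((k + 1 : ℤ) : ℂ) ^ 2) / 4 := by
    rw [ha, hb]
    push_cast
    ring
  have hneg (k : ℤ) : (a k * b (k + 2)).im = 0 ∧ (a k * b (k + 2)).re < 0 ↔
      lam ^ 2 - ((k + 1 : ℤ) : ℂ) ^ 2 < 0 := by
    rw [and_comm, ← Complex.neg_iff, hprod, Complex.div_neg_iff_of_pos (by norm_num)]
  simp only [hneg, ← Complex.sq_neg_iff]
  constructor
  · intro h
    simpa using h (-1) ⟨-1, by norm_num⟩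
  · intro h k _
    exact_mod_cast Complex.sq_sub_ofReal_sq_neg h ((k + 1 : ℤ) : ℝ)
end

section
/- Let n ∈ ℕ with n ≥ 1, m ∈ ℤ, and let c_{nm}, b_{n-1,m+3}, a_{nm}, a_{n-1,m+3}, b_{n,m+6}, c_{n+1,m+3}, d_{n+1,m+3}, d_{n,m+6} ∈ ℂ satisfy: (i) (n+1)·a_{nm}·c_{n+1,m+3} = n·c_{nm}·a_{n-1,m+3}; (ii) (n+1)·b_{n,m+6}·d_{n+1,m+3} = n·d_{n,m+6}·b_{n-1,m+3}; (iii) b_{n-1,m+3}·a_{nm} = a_{n-1,m+3}·b_{n,m+6}; (iv) d_{n+1,m+3}·c_{nm} = c_{n+1,m+3}·d_{n,m+6}. Assume moreover a_{n-1,m+3} ≠ 0, d_{n,m+6} ≠ 0, b_{n-1,m+3} ≠ 0 and c_{nm} ≠ 0. Then ((a_{nm}·d_{n+1,m+3})/(a_{n-1,m+3}·d_{n,m+6}))² = n²/(n+1)², and (a_{nm}·d_{n+1,m+3})/(a_{n-1,m+3}·d_{n,m+6}) = (b_{n,m+6}·c_{n+1,m+3})/(b_{n-1,m+3}·c_{nm}).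 -/
/-! With `x = a d' / (a' d)` and `y = b c' / (b' c)`, relations (b30) and (b35) multiply to
`x = y`, while (b40) and (b45) multiply to `x y = (n / (n + 1))²`; hence `x² = n² / (n + 1)²`. -/

section CoefficientRatios

variable {K : Type*} [Field K] {a a' b b' c c' d d' : K}

theorem ratio_eq_ratio_of_mul_eq (h30 : b' * a = a' * b) (h35 : d' * c = c' * d)
    (ha' : a' ≠ 0) (hd : d ≠ 0) (hb' : b' ≠ 0) (hc : c ≠ 0) :
    a * d' / (a' * d) = b * c' / (b' * c) := by
  rw [div_eq_div_iff (mul_ne_zero ha' hd) (mul_ne_zero hb' hc)]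
  linear_combination d' * c * h30 + a' * b * h35

theorem ratio_mul_ratio_eq_sq {p q : K} (hp : p ≠ 0)
    (h40 : p * a * c' = q * c * a') (h45 : p * b * d' = q * d * b')
    (ha' : a' ≠ 0) (hd : d ≠ 0) (hb' : b' ≠ 0) (hc : c ≠ 0) :
    a * d' / (a' * d) * (b * c' / (b' * c)) = (q / p) ^ 2 := by
  rw [div_mul_div_comm, div_pow,
    div_eq_div_iff (by simp [ha', hd, hb', hc]) (pow_ne_zero 2 hp)]
  linear_combination p * b * d' * h40 + q * c * a' * h45

end CoefficientRatios

/-- `a'`, `b'` stand for `a_{n-1,m+3}`, `b_{n-1,m+3}` and `c'`, `d'` for `c_{n+1,m+3}`, `d_{n+1,m+3}`. -/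
theorem stmt_5_general (n : ℕ)
    (anm a' bnm6 b' cnm c' d' dnm6 : ℂ)
    (h40 : ((n : ℂ) + 1) * anm * c' = (n : ℂ) * cnm * a')
    (h45 : ((n : ℂ) + 1) * bnm6 * d' = (n : ℂ) * dnm6 * b')
    (h30 : b' * anm = a' * bnm6)
    (h35 : d' * cnm = c' * dnm6)
    (ha' : a' ≠ 0) (hd'' : dnm6 ≠ 0) (hb' : b' ≠ 0) (hc : cnm ≠ 0) :
    ((anm * d') / (a' * dnm6)) ^ 2 = (n : ℂ) ^ 2 / ((n : ℂ) + 1) ^ 2 ∧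
      (anm * d') / (a' * dnm6) = (bnm6 * c') / (b' * cnm) := by
  have hratio := ratio_eq_ratio_of_mul_eq h30 h35 ha' hd'' hb' hc
  refine ⟨?_, hratio⟩
  rw [← div_pow, sq]
  nth_rewrite 2 [hratio]
  exact ratio_mul_ratio_eq_sq (Nat.cast_add_one_ne_zero n) h40 h45 ha' hd'' hb' hc

/-- From relations (b40), (b45) (at m+6), (b30) and (b35) one obtains
`((a·d')/(a'·d''))² = n²/(n+1)²` and `(a·d')/(a'·d'') = (b''·c')/(b'·c)`.
Here `anm, bnm6, cnm, dnm6` etc. name the coefficients `a_{nm}`, `b_{n,m+6}`,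
`c_{nm}`, `d_{n,m+6}`, `a'` = `a_{n-1,m+3}`, `b'` = `b_{n-1,m+3}`,
`c'` = `c_{n+1,m+3}`, `d'` = `d_{n+1,m+3}`. -/
theorem stmt_5 (n : ℕ) (hn : 1 ≤ n) (m : ℤ)
    (anm a' bnm6 b' cnm c' d' dnm6 : ℂ)
    (h40 : ((n : ℂ) + 1) * anm * c' = (n : ℂ) * cnm * a')
    (h45 : ((n : ℂ) + 1) * bnm6 * d' = (n : ℂ) * dnm6 * b')
    (h30 : b' * anm = a' * bnm6)
    (h35 : d' * cnm = c' * dnm6)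
    (ha' : a' ≠ 0) (hd'' : dnm6 ≠ 0) (hb' : b' ≠ 0) (hc : cnm ≠ 0) :
    ((anm * d') / (a' * dnm6)) ^ 2 = (n : ℂ) ^ 2 / ((n : ℂ) + 1) ^ 2 ∧
      (anm * d') / (a' * dnm6) = (bnm6 * c') / (b' * cnm) :=
  stmt_5_general n anm a' bnm6 b' cnm c' d' dnm6 h40 h45 h30 h35 ha' hd'' hb' hc
end

section
/- Let c ∈ ℂ and t ∈ ℤ. For integers p, q ≥ -1 define AD(p,q) = ((p+1)/(p+q+2))·(2c - (p+1)t - p(p+2)) and BC(p,q) = ((q+1)/(p+q+2))·(2c + (q+1)t - q(q+2)). Then for all integers p, q ≥ 0, with n = 1 + p + q, one has -AD(p,q) + (1/n)·BC(p,q) + AD(p-1,q) = t + 2p - q. -/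
variable {K : Type*} [Field K]

def adCoeff (c t p q : K) : K :=
  (p + 1) / (p + q + 2) * (2 * c - (p + 1) * t - p * (p + 2))

def bcCoeff (c t p q : K) : K :=
  (q + 1) / (p + q + 2) * (2 * c + (q + 1) * t - q * (q + 2))

theorem neg_adCoeff_add_bcCoeff_div_add_adCoeff_sub_one (c t p q : K)
    (hn : 1 + p + q ≠ 0) (hn' : p + q + 2 ≠ 0) :
    -adCoeff c t p q + 1 / (1 + p + q) * bcCoeff c t p q + adCoeff c t (p - 1) q
      = t + 2 * p - q := by
  have hn'' : p - 1 + q + 2 ≠ 0 := by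
    rwa [show p - 1 + q + 2 = 1 + p + q by ring]
  unfold adCoeff bcCoeff
  field_simp
  ring

/-- relation (b25) for the module V(c,2t): with `n = 1 + p + q`,
`-AD(p,q) + (1/n)·BC(p,q) + AD(p-1,q) = t + 2p - q`. -/
theorem stmt_7 (c : ℂ) (t : ℤ) (AD BC : ℤ → ℤ → ℂ)
    (hAD : ∀ p q : ℤ, -1 ≤ p → -1 ≤ q →
      AD p q = (((p : ℂ) + 1) / ((p : ℂ) + q + 2)) *
        (2 * c - ((p : ℂ) + 1) * t - (p : ℂ) * ((p : ℂ) + 2)))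
    (hBC : ∀ p q : ℤ, -1 ≤ p → -1 ≤ q →
      BC p q = (((q : ℂ) + 1) / ((p : ℂ) + q + 2)) *
        (2 * c + ((q : ℂ) + 1) * t - (q : ℂ) * ((q : ℂ) + 2))) :
    ∀ p q : ℤ, 0 ≤ p → 0 ≤ q →
      -AD p q + (1 / (1 + (p : ℂ) + q)) * BC p q + AD (p - 1) q
        = (t : ℂ) + 2 * p - q := by
  intro p q hp hq
  have hn : (1 + p + q : ℂ) ≠ 0 := by exact_mod_cast (by omega : 1 + p + q ≠ 0)
  have hn' : (p + q + 2 : ℂ) ≠ 0 := by exact_mod_cast (by omega : p + q + 2 ≠ 0)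
  have hADp : AD p q = adCoeff c t p q := hAD p q (by omega) (by omega)
  have hADp' : AD (p - 1) q = adCoeff c t (p - 1 : ℤ) q := hAD (p - 1) q (by omega) (by omega)
  have hBCp : BC p q = bcCoeff c t p q := hBC p q (by omega) (by omega)
  rw [hADp, hADp', hBCp, Int.cast_sub, Int.cast_one]
  exact neg_adCoeff_add_bcCoeff_div_add_adCoeff_sub_one c t p q hn hn'
end
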